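/- arXiv:2012.08394 — 4 statements merged into one kernel-verified Lean document; each statement's English description precedes it below -/
import Mathlib

section
/- Let δ = 1/10, C > 0, θ₀ > 0 and T > 0 with θ₀T ≤ 1. Let u : (0,1] × [−1,1] → ℝ be differentiable in its second variable and satisfy |u(t,x)| ≤ C t^{−(1/4+δ)} and |∂_x u(t,x)| ≤ C t^{−(3/4+δ)} for all t ∈ (0,1] and x ∈ [−1,1]. Let X : [0,θ₀T] → [−1,1] be continuous with X(t) = ∫_0^t u(s, X(s)) ds for all t ∈ [0,θ₀T]. Then for every θ ∈ [0,θ₀]: | T^{−3/4} ∫_0^{θT} ( u(s, X(s)) − u(s,0) ) ds | ≤ 4C² (θ₀T)^{1−2δ} / T^{3/4}. -/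
open MeasureTheory Real Set

/-- Error estimate for freezing the field at the origin: with `δ = 1/10`, if on
`(0,1] × [-1,1]` one has `|u(t,x)| ≤ C t^{-(1/4+δ)}` and `|∂_x u(t,x)| ≤ C t^{-(3/4+δ)}`,
`θ₀T ≤ 1`, and `X : [0,θ₀T] → [-1,1]` is continuous with `X(t) = ∫_0^t u(s,X(s)) ds`,
then for all `θ ∈ [0,θ₀]`:
`|T^{-3/4} ∫_0^{θT} (u(s,X(s)) - u(s,0)) ds| ≤ 4C² (θ₀T)^{1-2δ} / T^{3/4}`. -/
theorem freezing_error_estimate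
    (C θ₀ T : ℝ) (hC : 0 < C) (hθ₀ : 0 < θ₀) (hT : 0 < T) (hθ₀T : θ₀ * T ≤ 1)
    (u u' : ℝ → ℝ → ℝ)
    (huderiv : ∀ t ∈ Set.Ioc (0:ℝ) 1, ∀ x ∈ Set.Icc (-1:ℝ) 1,
      HasDerivWithinAt (fun y => u t y) (u' t x) (Set.Icc (-1) 1) x)
    (hu : ∀ t ∈ Set.Ioc (0:ℝ) 1, ∀ x ∈ Set.Icc (-1:ℝ) 1,
      |u t x| ≤ C * t ^ (-(1/4 + 1/10) : ℝ))
    (hu' : ∀ t ∈ Set.Ioc (0:ℝ) 1, ∀ x ∈ Set.Icc (-1:ℝ) 1,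
      |u' t x| ≤ C * t ^ (-(3/4 + 1/10) : ℝ))
    (X : ℝ → ℝ)
    (hXcont : ContinuousOn X (Set.Icc 0 (θ₀ * T)))
    (hXrange : ∀ t ∈ Set.Icc (0:ℝ) (θ₀ * T), X t ∈ Set.Icc (-1:ℝ) 1)
    (hXeq : ∀ t ∈ Set.Icc (0:ℝ) (θ₀ * T), X t = ∫ s in (0:ℝ)..t, u s (X s)) :
    ∀ θ ∈ Set.Icc (0:ℝ) θ₀,
      |T ^ (-(3:ℝ)/4) * ∫ s in (0:ℝ)..(θ * T), (u s (X s) - u s 0)| ≤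
        4 * C ^ 2 * (θ₀ * T) ^ ((1 : ℝ) - 2 * (1/10)) / T ^ ((3:ℝ)/4) := by
  intro θ hθ
  have hθ₀Tpos : 0 < θ₀ * T := mul_pos hθ₀ hT
  -- Step 1: bound on |X s|
  have hXbound : ∀ s ∈ Set.Icc (0:ℝ) (θ₀ * T), |X s| ≤ 2 * C * s ^ ((13:ℝ)/20) := by
    intro s hs
    rcases eq_or_lt_of_le hs.1 with rfl | hspos
    · have : X 0 = 0 := by simpa using hXeq 0 ⟨le_refl 0, le_of_lt hθ₀Tpos⟩
      simp [this]
    · have hXs := hXeq s hs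
      have hmem : ∀ r ∈ Set.Ioc (0:ℝ) s, r ∈ Set.Ioc (0:ℝ) 1 ∧ X r ∈ Set.Icc (-1:ℝ) 1 := by
        intro r hr
        have hr1 : r ≤ 1 := le_trans (le_trans hr.2 hs.2) hθ₀T
        exact ⟨⟨hr.1, hr1⟩, hXrange r ⟨hr.1.le, le_trans hr.2 hs.2⟩⟩
      have hbd : ∀ r ∈ Set.uIoc (0:ℝ) s, ‖u r (X r)‖ ≤ C * r ^ (-(1/4 + 1/10) : ℝ) := by
        intro r hr
        rw [Set.uIoc_of_le hspos.le] at hr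
        obtain ⟨h1, h2⟩ := hmem r hr
        exact hu r h1 (X r) h2
      have hint : IntervalIntegrable (fun r : ℝ => C * r ^ (-(1/4 + 1/10) : ℝ)) volume 0 s :=
        (intervalIntegral.intervalIntegrable_rpow' (by norm_num)).const_mul C
      have key := intervalIntegral.norm_integral_le_abs_of_norm_le
        (f := fun r => u r (X r)) (μ := volume) (a := 0) (b := s)
        (MeasureTheory.ae_restrict_of_forall_mem measurableSet_uIoc hbd) hint
      rw [← hXs] at key
      have hval : ∫ r in (0:ℝ)..s, C * r ^ (-(1/4 + 1/10) : ℝ)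
          = C * (s ^ ((13:ℝ)/20) / (13/20)) := by
        rw [intervalIntegral.integral_const_mul, integral_rpow (Or.inl (by norm_num))]
        norm_num
      calc |X s| ≤ |C * (s ^ ((13:ℝ)/20) / (13/20))| := by rw [← hval]; exact key
        _ = C * s ^ ((13:ℝ)/20) / (13/20) := by
            rw [abs_of_nonneg (by positivity)]; ring
        _ ≤ 2 * C * s ^ ((13:ℝ)/20) := by
            rw [div_le_iff₀ (by norm_num)]
            nlinarith [Real.rpow_nonneg hspos.le ((13:ℝ)/20), hC.le]
  -- Step 2
  set b := θ * T with hb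
  have hbnn : 0 ≤ b := mul_nonneg hθ.1 hT.le
  have hble : b ≤ θ₀ * T := mul_le_mul_of_nonneg_right hθ.2 hT.le
  have hdiffbd : ∀ s ∈ Set.uIoc (0:ℝ) b,
      ‖u s (X s) - u s 0‖ ≤ 2 * C ^ 2 * s ^ (-(1:ℝ)/5) := by
    intro s hs
    rw [Set.uIoc_of_le hbnn] at hs
    have hsIcc : s ∈ Set.Icc (0:ℝ) (θ₀ * T) := ⟨hs.1.le, hs.2.trans hble⟩
    have hs1 : s ∈ Set.Ioc (0:ℝ) 1 := ⟨hs.1, (hs.2.trans hble).trans hθ₀T⟩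
    have hXm := hXrange s hsIcc
    have h0m : (0:ℝ) ∈ Set.Icc (-1:ℝ) 1 := by norm_num
    have hmvt := Convex.norm_image_sub_le_of_norm_hasDerivWithin_le
      (f := fun y => u s y) (f' := fun x => u' s x) (C := C * s ^ (-(3/4 + 1/10) : ℝ))
      (fun x hx => huderiv s hs1 x hx)
      (fun x hx => by rw [Real.norm_eq_abs]; exact hu' s hs1 x hx)
      (convex_Icc _ _) h0m hXm
    have hX2 : ‖X s - 0‖ ≤ 2 * C * s ^ ((13:ℝ)/20) := by
      rw [sub_zero, Real.norm_eq_abs]; exact hXbound s hsIcc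
    have : ‖u s (X s) - u s 0‖ ≤ (C * s ^ (-(3/4 + 1/10) : ℝ)) * (2 * C * s ^ ((13:ℝ)/20)) := by
      refine hmvt.trans ?_
      exact mul_le_mul_of_nonneg_left hX2 (mul_nonneg hC.le (Real.rpow_nonneg hs.1.le _))
    refine this.trans ?_
    have heq : C * s ^ (-(3/4 + 1/10) : ℝ) * (2 * C * s ^ ((13:ℝ)/20))
        = 2 * C ^ 2 * (s ^ (-(3/4 + 1/10) : ℝ) * s ^ ((13:ℝ)/20)) := by ring
    rw [heq, ← Real.rpow_add hs.1]
    norm_num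
  have hgint : IntervalIntegrable (fun s : ℝ => 2 * C ^ 2 * s ^ (-(1:ℝ)/5)) volume 0 b :=
    (intervalIntegral.intervalIntegrable_rpow' (by norm_num)).const_mul _
  have key := intervalIntegral.norm_integral_le_abs_of_norm_le
    (f := fun s => u s (X s) - u s 0) (μ := volume) (a := 0) (b := b)
    (MeasureTheory.ae_restrict_of_forall_mem measurableSet_uIoc hdiffbd) hgint
  have hgval : ∫ s in (0:ℝ)..b, 2 * C ^ 2 * s ^ (-(1:ℝ)/5)
      = 2 * C ^ 2 * (b ^ ((4:ℝ)/5) / (4/5)) := by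
    rw [intervalIntegral.integral_const_mul, integral_rpow (Or.inl (by norm_num))]
    norm_num
  have hmain : |∫ s in (0:ℝ)..b, (u s (X s) - u s 0)| ≤ 4 * C ^ 2 * (θ₀ * T) ^ ((4:ℝ)/5) := by
    rw [← Real.norm_eq_abs]
    refine key.trans ?_
    rw [hgval, abs_of_nonneg (by positivity)]
    have hble' : b ^ ((4:ℝ)/5) ≤ (θ₀ * T) ^ ((4:ℝ)/5) :=
      Real.rpow_le_rpow hbnn hble (by norm_num)
    nlinarith [Real.rpow_nonneg hbnn ((4:ℝ)/5), sq_nonneg C]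
  have hTpow : (0:ℝ) < T ^ ((3:ℝ)/4) := Real.rpow_pos_of_pos hT _
  rw [abs_mul, show ((1:ℝ) - 2 * (1/10)) = (4:ℝ)/5 by norm_num,
    show (-(3:ℝ)/4) = -((3:ℝ)/4) by ring, Real.rpow_neg hT.le,
    abs_of_nonneg (inv_nonneg.2 hTpow.le), div_eq_mul_inv]
  exact (mul_le_mul_of_nonneg_left hmain (inv_nonneg.2 hTpow.le)).trans_eq (mul_comm _ _)
end

section
/- There exists n₀ ∈ ℕ such that the following holds: for every probability space carrying an i.i.d. family (H_j)_{j∈ℤ} of ℕ-valued random variables satisfying P(H_0 ≥ n) ≤ 3 e^{−n₀ n} for all integers n ≥ 1, define η_k ∈ {0,1} for k ∈ ℤ by η_k = 1 if H_m ≤ |k − m| for all m ∈ ℤ, and η_k = 0 otherwise. Then for every integer N ≥ 1: P( Σ_{k=−N}^{N} η_k < N ) ≤ e^{−N}. -/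
open MeasureTheory ProbabilityTheory Real Classical ENNReal

lemma geom_inv_le_two {x : ℝ} (hx : 1 ≤ x) :
    (1 - ENNReal.ofReal (Real.exp (-x)))⁻¹ ≤ 2 := by
  have h1 : (2:ℝ) ≤ Real.exp x := by
    have := Real.add_one_le_exp x; linarith
  have h2 : Real.exp (-x) ≤ 1/2 := by
    rw [Real.exp_neg, inv_le_comm₀ (Real.exp_pos x) (by norm_num)]
    · linarith
  have hr : ENNReal.ofReal (Real.exp (-x)) ≤ 2⁻¹ := by
    rw [show ((2:ℝ≥0∞)⁻¹) = ENNReal.ofReal (1/2) by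
      rw [ENNReal.ofReal_div_of_pos] <;> norm_num]
    exact ENNReal.ofReal_le_ofReal h2
  calc (1 - ENNReal.ofReal (Real.exp (-x)))⁻¹ ≤ ((1:ℝ≥0∞) - 2⁻¹)⁻¹ := by
        apply ENNReal.inv_le_inv'
        exact tsub_le_tsub_left hr 1
    _ = 2 := by rw [ENNReal.one_sub_inv_two]; simp

lemma lintegral_exp_aux {Ω : Type} [MeasurableSpace Ω] (P : Measure Ω)
    [IsProbabilityMeasure P] (g : Ω → ℕ) (hg : Measurable g)
    (htail : ∀ n : ℕ, 1 ≤ n →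
      P {ω | n ≤ g ω} ≤ ENNReal.ofReal (3 * Real.exp (-((100:ℝ) * n)))) :
    ∫⁻ ω, ENNReal.ofReal (Real.exp (6 * (g ω : ℝ))) ∂P ≤ ENNReal.ofReal (11/10) := by
  have key : ∫⁻ ω, ENNReal.ofReal (Real.exp (6 * (g ω : ℝ))) ∂P
      = ∑' n : ℕ, ENNReal.ofReal (Real.exp (6 * (n : ℝ))) * (Measure.map g P) {n} := by
    rw [← lintegral_map (f := fun n : ℕ => ENNReal.ofReal (Real.exp (6 * (n : ℝ))))
      (measurable_of_countable _) hg, lintegral_countable']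
  rw [key, tsum_eq_zero_add' ENNReal.summable]
  have h0 : ENNReal.ofReal (Real.exp (6 * ((0:ℕ) : ℝ))) * (Measure.map g P) {0} ≤ 1 := by
    haveI : IsProbabilityMeasure (Measure.map g P) := Measure.isProbabilityMeasure_map hg.aemeasurable
    simp only [Nat.cast_zero, mul_zero, Real.exp_zero, ENNReal.ofReal_one, one_mul]
    exact prob_le_one
  have hterm : ∀ n : ℕ, ENNReal.ofReal (Real.exp (6 * ((n+1:ℕ) : ℝ))) * (Measure.map g P) {n+1}
      ≤ ENNReal.ofReal (3 * Real.exp (-(94:ℝ))) * (ENNReal.ofReal (Real.exp (-(94:ℝ))))^n := by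
    intro n
    have hmap : (Measure.map g P) {n+1} ≤ ENNReal.ofReal (3 * Real.exp (-((100:ℝ) * (n+1:ℕ)))) := by
      rw [Measure.map_apply hg (Set.to_countable _).measurableSet]
      refine le_trans (measure_mono ?_) (htail (n+1) (by omega))
      intro ω hω
      simp only [Set.mem_preimage, Set.mem_singleton_iff] at hω
      simp [hω]
    calc ENNReal.ofReal (Real.exp (6 * ((n+1:ℕ) : ℝ))) * (Measure.map g P) {n+1}
        ≤ ENNReal.ofReal (Real.exp (6 * ((n+1:ℕ) : ℝ)))
            * ENNReal.ofReal (3 * Real.exp (-((100:ℝ) * (n+1:ℕ)))) := by gcongr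
      _ = ENNReal.ofReal (3 * Real.exp (-(94:ℝ))) * (ENNReal.ofReal (Real.exp (-(94:ℝ))))^n := by
          rw [← ENNReal.ofReal_mul (Real.exp_pos _).le, ← ENNReal.ofReal_pow (Real.exp_pos _).le,
            ← ENNReal.ofReal_mul (by positivity)]
          congr 1
          have e1 : Real.exp (6 * ((n+1:ℕ):ℝ)) * (3 * Real.exp (-(100 * ((n+1:ℕ):ℝ))))
              = 3 * Real.exp (6 * ((n+1:ℕ):ℝ) + -(100 * ((n+1:ℕ):ℝ))) := by
            rw [Real.exp_add]; ring
          rw [e1, show (6:ℝ) * ((n+1:ℕ):ℝ) + -(100 * ((n+1:ℕ):ℝ)) = -94 + (n:ℝ) * (-94) by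
            push_cast; ring, Real.exp_add, Real.exp_nat_mul]
          ring
  have htailsum : ∑' n : ℕ, ENNReal.ofReal (Real.exp (6 * ((n+1:ℕ) : ℝ))) * (Measure.map g P) {n+1}
      ≤ ENNReal.ofReal (1/10) := by
    calc _ ≤ ∑' n : ℕ, ENNReal.ofReal (3 * Real.exp (-(94:ℝ)))
            * (ENNReal.ofReal (Real.exp (-(94:ℝ))))^n := ENNReal.tsum_le_tsum hterm
      _ = ENNReal.ofReal (3 * Real.exp (-(94:ℝ)))
            * (1 - ENNReal.ofReal (Real.exp (-(94:ℝ))))⁻¹ := by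
          rw [ENNReal.tsum_mul_left, ENNReal.tsum_geometric]
      _ ≤ ENNReal.ofReal (3 * Real.exp (-(94:ℝ))) * 2 := by
          gcongr
          exact geom_inv_le_two (by norm_num)
      _ ≤ ENNReal.ofReal (1/10) := by
          rw [show (2:ℝ≥0∞) = ENNReal.ofReal 2 by simp, ← ENNReal.ofReal_mul (by positivity)]
          apply ENNReal.ofReal_le_ofReal
          have h94 : (95:ℝ) ≤ Real.exp 94 := by
            have := Real.add_one_le_exp (94:ℝ); linarith
          have hp : Real.exp (-(94:ℝ)) ≤ 1/95 := by
            rw [Real.exp_neg, inv_le_comm₀ (Real.exp_pos _) (by norm_num)]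
            linarith
          nlinarith [Real.exp_pos (-(94:ℝ))]
  calc _ ≤ (1:ℝ≥0∞) + ENNReal.ofReal (1/10) := add_le_add h0 htailsum
    _ = ENNReal.ofReal (11/10) := by
        rw [show (1:ℝ≥0∞) = ENNReal.ofReal 1 by simp, ← ENNReal.ofReal_add] <;> norm_num

lemma mgf_aux {Ω : Type} [MeasurableSpace Ω] (P : Measure Ω)
    [IsProbabilityMeasure P] (g : Ω → ℕ) (hg : Measurable g)
    (htail : ∀ n : ℕ, 1 ≤ n →
      P {ω | n ≤ g ω} ≤ ENNReal.ofReal (3 * Real.exp (-((100:ℝ) * n)))) :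
    Integrable (fun ω => Real.exp (6 * ((g ω : ℕ):ℝ))) P ∧
      mgf (fun ω => ((g ω : ℕ):ℝ)) P 6 ≤ Real.exp (1/10) := by
  have hmeas : AEStronglyMeasurable (fun ω => Real.exp (6 * ((g ω : ℕ):ℝ))) P :=
    (((measurable_of_countable (fun n : ℕ => (n:ℝ))).comp hg).const_mul 6).exp.aestronglyMeasurable
  have hnonneg : 0 ≤ᵐ[P] fun ω => Real.exp (6 * ((g ω : ℕ):ℝ)) :=
    Filter.Eventually.of_forall fun ω => (Real.exp_pos _).le
  have hlint := lintegral_exp_aux P g hg htail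
  have hint : Integrable (fun ω => Real.exp (6 * ((g ω : ℕ):ℝ))) P := by
    refine ⟨hmeas, ?_⟩
    rw [hasFiniteIntegral_iff_ofReal hnonneg]
    exact lt_of_le_of_lt hlint ENNReal.ofReal_lt_top
  refine ⟨hint, ?_⟩
  have : mgf (fun ω => ((g ω : ℕ):ℝ)) P 6 = ∫ ω, Real.exp (6 * ((g ω : ℕ):ℝ)) ∂P := rfl
  rw [this, integral_eq_lintegral_of_nonneg_ae hnonneg hmeas]
  have h1110 : (11/10 : ℝ) ≤ Real.exp (1/10) := by
    have := Real.add_one_le_exp (1/10 : ℝ); linarith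
  refine le_trans ?_ h1110
  exact ENNReal.toReal_le_of_le_ofReal (by norm_num) hlint

/-- Percolation-type estimate: there exists `n₀ ∈ ℕ` such that for any i.i.d. family
`(H_j)_{j ∈ ℤ}` of `ℕ`-valued random variables with `P(H_0 ≥ n) ≤ 3 e^{-n₀ n}` for all
`n ≥ 1`, defining `η_k = 1` iff `H_m ≤ |k - m|` for all `m ∈ ℤ`, one has for all `N ≥ 1`:
`P(Σ_{k=-N}^N η_k < N) ≤ e^{-N}`. -/
theorem good_sites_density_bound :
    ∃ n₀ : ℕ, ∀ {Ω : Type} [MeasurableSpace Ω] (P : Measure Ω),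
      IsProbabilityMeasure P → ∀ H : ℤ → Ω → ℕ,
      (∀ j : ℤ, Measurable (H j)) →
      iIndepFun H P →
      (∀ j : ℤ, Measure.map (H j) P = Measure.map (H 0) P) →
      (∀ n : ℕ, 1 ≤ n →
        P {ω | n ≤ H 0 ω} ≤ ENNReal.ofReal (3 * Real.exp (-((n₀ : ℝ) * n)))) →
      ∀ N : ℕ, 1 ≤ N →
        P {ω | (∑ k ∈ Finset.Icc (-(N:ℤ)) (N:ℤ),
            (if ∀ m : ℤ, (H m ω : ℤ) ≤ |k - m| then (1:ℕ) else 0)) < N} ≤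
          ENNReal.ofReal (Real.exp (-(N:ℝ))) := by
  refine ⟨100, ?_⟩
  intro Ω _ P hP H hmeas hind hid htail N hN
  haveI := hP
  push_cast at htail
  have htail' : ∀ (j : ℤ) (n : ℕ), 1 ≤ n →
      P {ω | n ≤ H j ω} ≤ ENNReal.ofReal (3 * Real.exp (-((100:ℝ) * n))) := by
    intro j n hn
    have hset : {ω | n ≤ H j ω} = H j ⁻¹' {x : ℕ | n ≤ x} := rfl
    have hset0 : {ω | n ≤ H 0 ω} = H 0 ⁻¹' {x : ℕ | n ≤ x} := rfl
    rw [hset, ← Measure.map_apply (hmeas j) (Set.to_countable _).measurableSet, hid j,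
      Measure.map_apply (hmeas 0) (Set.to_countable _).measurableSet, ← hset0]
    exact htail n hn
  set s2 : Finset ℤ := Finset.Icc (-(2*(N:ℤ))) (2*(N:ℤ)) with hs2
  set X : ℤ → Ω → ℝ := fun m ω => ((H m ω : ℕ) : ℝ) with hX
  set Sfar : Set Ω := ⋃ j : ℕ,
      ({ω | (N + 2 + j : ℕ) ≤ H (((2*N+1+j : ℕ) : ℤ)) ω} ∪
       {ω | (N + 2 + j : ℕ) ≤ H (-((2*N+1+j : ℕ) : ℤ)) ω}) with hSfar
  set Snear : Set Ω := {ω | (N:ℝ)/2 ≤ (∑ m ∈ s2, X m) ω} with hSnear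
  -- pointwise inclusion
  have hsub : {ω | (∑ k ∈ Finset.Icc (-(N:ℤ)) (N:ℤ),
      (if ∀ m : ℤ, (H m ω : ℤ) ≤ |k - m| then (1:ℕ) else 0)) < N} ⊆ Sfar ∪ Snear := by
    intro ω hω
    simp only [Set.mem_setOf_eq] at hω
    by_cases hfar : ω ∈ Sfar
    · exact Or.inl hfar
    right
    have hfar' : ∀ m : ℤ, 2*(N:ℤ) < |m| → (H m ω : ℤ) ≤ |m| - N := by
      intro m hm
      by_contra hcon
      push_neg at hcon
      apply hfar
      obtain ⟨j, hj⟩ : ∃ j : ℕ, |m| = 2*(N:ℤ) + 1 + j := ⟨(|m| - (2*N+1)).toNat, by omega⟩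
      refine Set.mem_iUnion.mpr ⟨j, ?_⟩
      have habs : m = ((2*N+1+j : ℕ) : ℤ) ∨ m = -((2*N+1+j : ℕ) : ℤ) := by
        rcases abs_cases m with ⟨h1, _⟩ | ⟨h1, _⟩
        · left; push_cast; omega
        · right; push_cast; omega
      have hval : ((N + 2 + j : ℕ) : ℤ) ≤ (H m ω : ℤ) := by push_cast; omega
      rcases habs with h | h
      · left; rw [← h]; exact_mod_cast hval
      · right; rw [← h]; exact_mod_cast hval
    classical
    set p : ℤ → Prop := fun k => ∀ m : ℤ, (H m ω : ℤ) ≤ |k - m| with hpdef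
    set s : Finset ℤ := Finset.Icc (-(N:ℤ)) (N:ℤ) with hs
    have hcards : s.card = 2*N+1 := by rw [hs, Int.card_Icc]; omega
    have hω' : (s.filter p).card < N := by
      rw [Finset.card_filter]
      exact lt_of_le_of_lt (le_of_eq (Finset.sum_congr rfl (fun k _ => by
        simp only [hpdef]))) hω
    have hBcard : N + 1 ≤ (s.filter fun k => ¬ p k).card := by
      have h2 := Finset.card_filter_add_card_filter_not (s := s) (p := p)
      omega
    have hcover : (s.filter fun k => ¬ p k) ⊆
        s2.biUnion (fun m => Finset.Icc (m - (H m ω : ℤ) + 1) (m + (H m ω : ℤ) - 1)) := by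
      intro k hk
      rw [Finset.mem_filter] at hk
      obtain ⟨hks, hknp⟩ := hk
      simp only [hpdef, not_forall, not_le] at hknp
      obtain ⟨m, hm⟩ := hknp
      have hkN : |k| ≤ (N:ℤ) := by
        rw [hs, Finset.mem_Icc] at hks
        exact abs_le.mpr hks
      have hms2 : m ∈ s2 := by
        rw [hs2, Finset.mem_Icc, ← abs_le]
        by_contra hcon2
        push_neg at hcon2
        have h3 := hfar' m hcon2
        have h4 : |m| - |k| ≤ |k - m| := by
          have := abs_sub_abs_le_abs_sub m k
          rwa [abs_sub_comm m k] at this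
        linarith
      refine Finset.mem_biUnion.mpr ⟨m, hms2, ?_⟩
      rw [Finset.mem_Icc]
      have := abs_lt.mp hm
      omega
    have hcard2 : (s.filter fun k => ¬ p k).card ≤ ∑ m ∈ s2, 2 * H m ω := by
      calc (s.filter fun k => ¬ p k).card
          ≤ (s2.biUnion fun m => Finset.Icc (m - (H m ω : ℤ) + 1) (m + (H m ω : ℤ) - 1)).card :=
            Finset.card_le_card hcover
        _ ≤ ∑ m ∈ s2, (Finset.Icc (m - (H m ω : ℤ) + 1) (m + (H m ω : ℤ) - 1)).card :=
            Finset.card_biUnion_le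
        _ ≤ ∑ m ∈ s2, 2 * H m ω := Finset.sum_le_sum fun m _ => by
            rw [Int.card_Icc]; omega
    rw [hSnear]
    simp only [Set.mem_setOf_eq, Finset.sum_apply]
    have hfin : (N:ℝ) + 1 ≤ ∑ m ∈ s2, 2 * ((H m ω : ℕ):ℝ) := by
      have h5 : N + 1 ≤ ∑ m ∈ s2, 2 * H m ω := hBcard.trans hcard2
      calc (N:ℝ) + 1 = ((N+1 : ℕ):ℝ) := by push_cast; ring
        _ ≤ ((∑ m ∈ s2, 2 * H m ω : ℕ) : ℝ) := by exact_mod_cast h5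
        _ = ∑ m ∈ s2, 2 * ((H m ω : ℕ):ℝ) := by push_cast; rfl
    have hsum2 : ∑ m ∈ s2, 2 * ((H m ω : ℕ):ℝ) = 2 * ∑ m ∈ s2, X m ω := by
      rw [Finset.mul_sum]
    rw [hsum2] at hfin
    linarith
  -- far part bound
  have hPfar : P Sfar ≤ ENNReal.ofReal (2⁻¹ * Real.exp (-(N:ℝ))) := by
    have h1 : P Sfar ≤ ∑' j : ℕ,
        ((2:ℝ≥0∞) * ENNReal.ofReal (3 * Real.exp (-((100:ℝ) * ((N+2+j:ℕ):ℝ))))) := by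
      rw [hSfar]
      refine (measure_iUnion_le _).trans (ENNReal.tsum_le_tsum fun j => ?_)
      refine (measure_union_le _ _).trans ?_
      refine le_trans (add_le_add (htail' _ (N+2+j) (by omega)) (htail' _ (N+2+j) (by omega)))
        (le_of_eq (two_mul _).symm)
    have h2 : ∀ j : ℕ, (2:ℝ≥0∞) * ENNReal.ofReal (3 * Real.exp (-((100:ℝ) * ((N+2+j:ℕ):ℝ))))
        = ((2:ℝ≥0∞) * ENNReal.ofReal (3 * Real.exp (-((100:ℝ) * ((N:ℝ)+2)))))
          * (ENNReal.ofReal (Real.exp (-(100:ℝ))))^j := by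
      intro j
      rw [mul_assoc]
      congr 1
      rw [← ENNReal.ofReal_pow (Real.exp_pos _).le, ← ENNReal.ofReal_mul (by positivity)]
      congr 1
      have e1 : Real.exp (-((100:ℝ) * ((N+2+j:ℕ):ℝ)))
          = Real.exp (-((100:ℝ) * ((N:ℝ)+2))) * Real.exp (-(100:ℝ))^j := by
        rw [← Real.exp_nat_mul, ← Real.exp_add]
        congr 1
        push_cast
        ring
      rw [e1]; ring
    have hgeo : P Sfar ≤ ((2:ℝ≥0∞) * ENNReal.ofReal (3 * Real.exp (-((100:ℝ) * ((N:ℝ)+2))))) * 2 := by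
      refine h1.trans ?_
      calc ∑' j : ℕ, ((2:ℝ≥0∞) * ENNReal.ofReal (3 * Real.exp (-((100:ℝ) * ((N+2+j:ℕ):ℝ)))))
          = ((2:ℝ≥0∞) * ENNReal.ofReal (3 * Real.exp (-((100:ℝ) * ((N:ℝ)+2)))))
            * (1 - ENNReal.ofReal (Real.exp (-(100:ℝ))))⁻¹ := by
            simp_rw [h2]
            rw [ENNReal.tsum_mul_left, ENNReal.tsum_geometric]
        _ ≤ _ := by
            gcongr
            exact geom_inv_le_two (by norm_num)
    refine hgeo.trans ?_
    rw [show (2:ℝ≥0∞) = ENNReal.ofReal 2 by simp, ← ENNReal.ofReal_mul (by norm_num),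
      ← ENNReal.ofReal_mul (by positivity)]
    apply ENNReal.ofReal_le_ofReal
    have hN1 : (1:ℝ) ≤ (N:ℝ) := by exact_mod_cast hN
    have e1 : Real.exp (-((100:ℝ) * ((N:ℝ)+2))) ≤ Real.exp (-(200:ℝ)) * Real.exp (-(N:ℝ)) := by
      rw [← Real.exp_add]
      apply Real.exp_le_exp.mpr
      nlinarith
    have e2 : Real.exp (-(200:ℝ)) ≤ 1/24 := by
      have h200 : (201:ℝ) ≤ Real.exp 200 := by
        have := Real.add_one_le_exp (200:ℝ); linarith
      rw [Real.exp_neg, inv_le_comm₀ (Real.exp_pos _) (by norm_num)]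
      linarith
    nlinarith [Real.exp_pos (-(N:ℝ)), Real.exp_pos (-(200:ℝ))]
  -- near part bound (Chernoff)
  have hPnear : P Snear ≤ ENNReal.ofReal (2⁻¹ * Real.exp (-(N:ℝ))) := by
    have hXmeas : ∀ m : ℤ, Measurable (X m) :=
      fun m => (measurable_of_countable _).comp (hmeas m)
    have hXind : iIndepFun X P :=
      hind.comp (fun _ (n:ℕ) => (n:ℝ)) (fun _ => measurable_of_countable _)
    have hint : ∀ m ∈ s2, Integrable (fun ω => Real.exp (6 * X m ω)) P :=
      fun m _ => (mgf_aux P (H m) (hmeas m) (htail' m)).1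
    have hch := measure_ge_le_exp_mul_mgf (μ := P) (X := ∑ m ∈ s2, X m) (t := 6)
      ((N:ℝ)/2) (by norm_num) (hXind.integrable_exp_mul_sum hXmeas hint)
    have hmgf : mgf (∑ m ∈ s2, X m) P 6 ≤ Real.exp ((s2.card : ℝ) * (1/10)) := by
      rw [hXind.mgf_sum hXmeas]
      calc ∏ m ∈ s2, mgf (X m) P 6 ≤ ∏ m ∈ s2, Real.exp (1/10) :=
            Finset.prod_le_prod (fun m _ => mgf_nonneg)
              (fun m _ => (mgf_aux P (H m) (hmeas m) (htail' m)).2)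
        _ = Real.exp ((s2.card : ℝ) * (1/10)) := by
            rw [Finset.prod_const, ← Real.exp_nat_mul]
    have hcards2 : s2.card = 4*N+1 := by rw [hs2, Int.card_Icc]; omega
    have hN1 : (1:ℝ) ≤ (N:ℝ) := by exact_mod_cast hN
    have hreal : Real.exp (-6 * ((N:ℝ)/2)) * mgf (∑ m ∈ s2, X m) P 6
        ≤ 2⁻¹ * Real.exp (-(N:ℝ)) := by
      calc Real.exp (-6 * ((N:ℝ)/2)) * mgf (∑ m ∈ s2, X m) P 6
          ≤ Real.exp (-6 * ((N:ℝ)/2)) * Real.exp ((s2.card : ℝ) * (1/10)) := by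
            gcongr
        _ = Real.exp (-6 * ((N:ℝ)/2) + (s2.card : ℝ) * (1/10)) := (Real.exp_add _ _).symm
        _ ≤ Real.exp (-(N:ℝ) + -1) := by
            apply Real.exp_le_exp.mpr
            rw [hcards2]
            push_cast
            linarith
        _ = Real.exp (-(N:ℝ)) * Real.exp (-1) := Real.exp_add _ _
        _ ≤ 2⁻¹ * Real.exp (-(N:ℝ)) := by
            have he : Real.exp (-(1:ℝ)) ≤ 2⁻¹ := by
              have h2 : (2:ℝ) ≤ Real.exp 1 := by
                have := Real.add_one_le_exp (1:ℝ); linarith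
              rw [Real.exp_neg, inv_le_comm₀ (Real.exp_pos _) (by norm_num)]
              linarith
            nlinarith [Real.exp_pos (-(N:ℝ))]
    have : P Snear = ENNReal.ofReal ((P Snear).toReal) :=
      (ENNReal.ofReal_toReal (measure_ne_top _ _)).symm
    rw [this]
    apply ENNReal.ofReal_le_ofReal
    exact (hch.trans hreal)
  calc P {ω | (∑ k ∈ Finset.Icc (-(N:ℤ)) (N:ℤ),
        (if ∀ m : ℤ, (H m ω : ℤ) ≤ |k - m| then (1:ℕ) else 0)) < N}
      ≤ P (Sfar ∪ Snear) := measure_mono hsub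
    _ ≤ P Sfar + P Snear := measure_union_le _ _
    _ ≤ ENNReal.ofReal (2⁻¹ * Real.exp (-(N:ℝ))) + ENNReal.ofReal (2⁻¹ * Real.exp (-(N:ℝ))) :=
        add_le_add hPfar hPnear
    _ = ENNReal.ofReal (Real.exp (-(N:ℝ))) := by
        rw [← ENNReal.ofReal_add (by positivity) (by positivity)]
        congr 1
        ring
end

section
/- Let U ⊂ ℝ × ℝ be an open set, let u : U → ℝ be twice continuously differentiable and satisfy the heat equation ∂_t u = ∂_{xx} u on U. Suppose (s,y) ∈ U satisfies u(s,y) = 0, ∂_x u(s,y) = 0 and ∂_t u(s,y) > 0. Then there exists ε > 0 such that u(s',y') > 0 for all (s',y') ∈ (s, s+ε) × (y−ε, y+ε). -/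
open Set

/-- If a `C²` solution of the heat equation on an open set has a zero `(s,y)` with
vanishing spatial derivative and strictly positive time derivative, then `u > 0` on a
space-time box `(s, s+ε) × (y-ε, y+ε)`. -/
theorem positive_after_neutral_zero
    (U : Set (ℝ × ℝ)) (hU : IsOpen U) (u : ℝ → ℝ → ℝ)
    (hC2 : ContDiffOn ℝ 2 (fun p : ℝ × ℝ => u p.1 p.2) U)
    (hheat : ∀ p ∈ U, deriv (fun t => u t p.2) p.1 =
      deriv (fun y => deriv (fun z => u p.1 z) y) p.2)
    (s y : ℝ) (hmem : (s, y) ∈ U)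
    (hzero : u s y = 0)
    (hdx : deriv (fun z => u s z) y = 0)
    (hdt : 0 < deriv (fun t => u t y) s) :
    ∃ ε : ℝ, 0 < ε ∧ ∀ s' ∈ Set.Ioo s (s + ε), ∀ y' ∈ Set.Ioo (y - ε) (y + ε),
      0 < u s' y' := by
  classical
  set F : ℝ × ℝ → ℝ := fun p => u p.1 p.2 with hFdef
  set T : ℝ × ℝ → ℝ := fun p => fderiv ℝ F p (1, 0) with hTdef
  have hdiff : ∀ p ∈ U, DifferentiableAt ℝ F p := fun p hp =>
    (hC2.contDiffAt (hU.mem_nhds hp)).differentiableAt two_ne_zero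
  have lemA : ∀ p ∈ U, HasDerivAt (fun t => u t p.2) (T p) p.1 := by
    intro p hp
    have h1 : HasDerivAt (fun t : ℝ => ((t, p.2) : ℝ × ℝ)) ((1 : ℝ), (0 : ℝ)) p.1 :=
      (hasDerivAt_id p.1).prodMk (hasDerivAt_const p.1 p.2)
    exact ((hdiff p hp).hasFDerivAt).comp_hasDerivAt p.1 h1
  have lemB : ∀ p ∈ U, HasDerivAt (fun z => u p.1 z) (fderiv ℝ F p (0, 1)) p.2 := by
    intro p hp
    have h1 : HasDerivAt (fun z : ℝ => ((p.1, z) : ℝ × ℝ)) ((0 : ℝ), (1 : ℝ)) p.2 :=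
      (hasDerivAt_const p.2 p.1).prodMk (hasDerivAt_id p.2)
    exact ((hdiff p hp).hasFDerivAt).comp_hasDerivAt p.2 h1
  -- continuity of the time derivative
  have hTcont : ContinuousOn T U := by
    have h1 : ContinuousOn (fun p => fderiv ℝ F p) U :=
      hC2.continuousOn_fderiv_of_isOpen hU one_le_two
    exact h1.clm_apply continuousOn_const
  have hT0 : 0 < T (s, y) := by
    have h := (lemA (s, y) hmem).deriv
    rw [h] at hdt; exact hdt
  have hnhds : U ∩ T ⁻¹' (Ioi 0) ∈ nhds (s, y) :=
    Filter.inter_mem (hU.mem_nhds hmem)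
      ((hTcont.continuousAt (hU.mem_nhds hmem)).preimage_mem_nhds (Ioi_mem_nhds hT0))
  obtain ⟨ε, hε, hball⟩ := Metric.mem_nhds_iff.1 hnhds
  have hkey : ∀ a b : ℝ, |a - s| < ε → |b - y| < ε → (a, b) ∈ U ∧ 0 < T (a, b) := by
    intro a b ha hb
    have hmemball : ((a, b) : ℝ × ℝ) ∈ Metric.ball ((s, y) : ℝ × ℝ) ε := by
      rw [Metric.mem_ball, Prod.dist_eq]
      exact max_lt (by rwa [Real.dist_eq]) (by rwa [Real.dist_eq])
    have h2 := hball hmemball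
    exact ⟨h2.1, h2.2⟩
  -- differentiability of the fderiv
  have hfC1 : ContDiffOn ℝ 1 (fun p => fderiv ℝ F p) U :=
    hC2.fderiv_of_isOpen hU (by norm_num)
  -- derivative of the spatial derivative in the x direction equals T (the heat eq)
  have hder' : ∀ z : ℝ, |z - y| < ε →
      HasDerivAt (fun w => deriv (fun z' => u s z') w) (T (s, z)) z := by
    intro z hz
    obtain ⟨hzU, hzT⟩ := hkey s z (by simpa using hε) hz
    have hev : (fun w => deriv (fun z' => u s z') w) =ᶠ[nhds z]
        (fun w => fderiv ℝ F (s, w) (0, 1)) := by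
      have hop : {w : ℝ | (s, w) ∈ U} ∈ nhds z :=
        (hU.preimage (continuous_const.prodMk continuous_id)).mem_nhds hzU
      filter_upwards [hop] with w hw
      exact (lemB (s, w) hw).deriv
    have hGd : DifferentiableAt ℝ (fun w : ℝ => fderiv ℝ F (s, w) (0, 1)) z := by
      have h1 : DifferentiableAt ℝ (fun p => fderiv ℝ F p) (s, z) :=
        (hfC1.contDiffAt (hU.mem_nhds hzU)).differentiableAt one_ne_zero
      exact (h1.clm_apply (differentiableAt_const _)).comp z
        ((differentiableAt_const s).prodMk differentiableAt_id)
    have hdz : DifferentiableAt ℝ (fun w => deriv (fun z' => u s z') w) z :=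
      hGd.congr_of_eventuallyEq hev
    have hhd := hdz.hasDerivAt
    have heq : deriv (fun w => deriv (fun z' => u s z') w) z = T (s, z) :=
      (hheat (s, z) hzU).symm.trans (lemA (s, z) hzU).deriv
    rwa [heq] at hhd
  -- the spatial derivative is positive to the right of y and negative to the left
  have hg'pos : ∀ w ∈ Ioo y (y + ε), 0 < deriv (fun z => u s z) w := by
    intro w hw
    have hmono : StrictMonoOn (fun w => deriv (fun z' => u s z') w) (Icc y w) := by
      apply strictMonoOn_of_deriv_pos (convex_Icc _ _)
      · intro z hz
        have hz' : |z - y| < ε := by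
          rw [abs_lt]; constructor <;> [linarith [hz.1, hε]; linarith [hz.2, hw.2]]
        exact ((hder' z hz').differentiableAt).continuousAt.continuousWithinAt
      · intro z hz
        rw [interior_Icc] at hz
        have hz' : |z - y| < ε := by
          rw [abs_lt]; constructor <;> [linarith [hz.1, hε]; linarith [hz.2, hw.2]]
        rw [(hder' z hz').deriv]
        exact (hkey s z (by simpa using hε) hz').2
    have h' : deriv (fun z => u s z) y < deriv (fun z => u s z) w :=
      hmono (left_mem_Icc.2 hw.1.le) (right_mem_Icc.2 hw.1.le) hw.1
    rwa [hdx] at h'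
  have hg'neg : ∀ w ∈ Ioo (y - ε) y, deriv (fun z => u s z) w < 0 := by
    intro w hw
    have hmono : StrictMonoOn (fun w => deriv (fun z' => u s z') w) (Icc w y) := by
      apply strictMonoOn_of_deriv_pos (convex_Icc _ _)
      · intro z hz
        have hz' : |z - y| < ε := by
          rw [abs_lt]; constructor <;> [linarith [hz.1, hw.1]; linarith [hz.2, hε]]
        exact ((hder' z hz').differentiableAt).continuousAt.continuousWithinAt
      · intro z hz
        rw [interior_Icc] at hz
        have hz' : |z - y| < ε := by
          rw [abs_lt]; constructor <;> [linarith [hz.1, hw.1]; linarith [hz.2, hε]]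
        rw [(hder' z hz').deriv]
        exact (hkey s z (by simpa using hε) hz').2
    have h' : deriv (fun z => u s z) w < deriv (fun z => u s z) y :=
      hmono (left_mem_Icc.2 hw.2.le) (right_mem_Icc.2 hw.2.le) hw.2
    rwa [hdx] at h'
  -- u(s, ·) is nonnegative on the interval
  have hge : ∀ y' ∈ Ioo (y - ε) (y + ε), 0 ≤ u s y' := by
    intro y' hy'
    rcases lt_trichotomy y' y with hlt | heq | hgt
    · have hanti : StrictAntiOn (fun z => u s z) (Icc y' y) := by
        apply strictAntiOn_of_deriv_neg (convex_Icc _ _)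
        · intro z hz
          have hz' : |z - y| < ε := by
            rw [abs_lt]; constructor <;> [linarith [hz.1, hy'.1]; linarith [hz.2, hε]]
          exact (lemB (s, z) (hkey s z (by simpa using hε) hz').1).continuousAt.continuousWithinAt
        · intro z hz
          rw [interior_Icc] at hz
          exact hg'neg z ⟨by linarith [hz.1, hy'.1], hz.2⟩
      have h' : u s y < u s y' :=
        hanti (left_mem_Icc.2 hlt.le) (right_mem_Icc.2 hlt.le) hlt
      rw [hzero] at h'
      exact h'.le
    · rw [heq, hzero]
    · have hmono : StrictMonoOn (fun z => u s z) (Icc y y') := by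
        apply strictMonoOn_of_deriv_pos (convex_Icc _ _)
        · intro z hz
          have hz' : |z - y| < ε := by
            rw [abs_lt]; constructor <;> [linarith [hz.1, hε]; linarith [hz.2, hy'.2]]
          exact (lemB (s, z) (hkey s z (by simpa using hε) hz').1).continuousAt.continuousWithinAt
        · intro z hz
          rw [interior_Icc] at hz
          exact hg'pos z ⟨hz.1, by linarith [hz.2, hy'.2]⟩
      have h' : u s y < u s y' :=
        hmono (left_mem_Icc.2 hgt.le) (right_mem_Icc.2 hgt.le) hgt
      rw [hzero] at h'
      exact h'.le
  refine ⟨ε, hε, ?_⟩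
  intro s' hs' y' hy'
  have hy'abs : |y' - y| < ε := by
    rw [abs_lt]; constructor <;> [linarith [hy'.1]; linarith [hy'.2]]
  have hmono : StrictMonoOn (fun t => u t y') (Icc s s') := by
    apply strictMonoOn_of_deriv_pos (convex_Icc _ _)
    · intro t ht
      have ht' : |t - s| < ε := by
        rw [abs_lt]; constructor <;> [linarith [ht.1, hε]; linarith [ht.2, hs'.2]]
      exact (lemA (t, y') (hkey t y' ht' hy'abs).1).continuousAt.continuousWithinAt
    · intro t ht
      rw [interior_Icc] at ht
      have ht' : |t - s| < ε := by
        rw [abs_lt]; constructor <;> [linarith [ht.1, hε]; linarith [ht.2, hs'.2]]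
      rw [(lemA (t, y') (hkey t y' ht' hy'abs).1).deriv]
      exact (hkey t y' ht' hy'abs).2
  have h : u s y' < u s' y' :=
    hmono (left_mem_Icc.2 hs'.1.le) (right_mem_Icc.2 hs'.1.le) hs'.1
  calc (0 : ℝ) ≤ u s y' := hge y' hy'
    _ < u s' y' := h
end

section
/- Let U ⊂ ℝ × ℝ be an open set, let u : U → ℝ be smooth and satisfy the heat equation ∂_t u = ∂_{xx} u on U. Suppose (s,y) ∈ U satisfies u(s,y) = 0, ∂_x u(s,y) = 0 and ∂_t u(s,y) ≠ 0. Then there exists an open neighborhood W ⊂ U of (s,y) such that (s,y) is the only point of W at which both u and ∂_x u vanish. -/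
open Set

/-- If a smooth solution of the heat equation on an open set has a zero `(s,y)` with
vanishing spatial derivative but nonvanishing time derivative, then `(s,y)` is the only
point of some neighborhood where both `u` and `∂_x u` vanish. -/
theorem degenerate_zero_isolated
    (U : Set (ℝ × ℝ)) (hU : IsOpen U) (u : ℝ → ℝ → ℝ)
    (hsmooth : ContDiffOn ℝ (⊤ : ℕ∞) (fun p : ℝ × ℝ => u p.1 p.2) U)
    (hheat : ∀ p ∈ U, deriv (fun t => u t p.2) p.1 =
      deriv (fun y => deriv (fun z => u p.1 z) y) p.2)
    (s y : ℝ) (hmem : (s, y) ∈ U)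
    (hzero : u s y = 0)
    (hdx : deriv (fun z => u s z) y = 0)
    (hdt : deriv (fun t => u t y) s ≠ 0) :
    ∃ W : Set (ℝ × ℝ), IsOpen W ∧ W ⊆ U ∧ (s, y) ∈ W ∧
      ∀ p ∈ W, (u p.1 p.2 = 0 ∧ deriv (fun z => u p.1 z) p.2 = 0) → p = (s, y) := by
  set f : ℝ × ℝ → ℝ := fun p => u p.1 p.2 with hf_def
  set D : ℝ × ℝ → (ℝ × ℝ →L[ℝ] ℝ) := fderiv ℝ f with hD_def
  have hU_nhds : U ∈ nhds (s, y) := hU.mem_nhds hmem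
  -- partial derivative in second coordinate
  have lemA : ∀ p ∈ U, HasDerivAt (fun z => u p.1 z) (D p (0, 1)) p.2 := by
    intro p hp
    have hd : DifferentiableAt ℝ f p :=
      (hsmooth.contDiffAt (hU.mem_nhds hp)).differentiableAt (by simp)
    have inner : HasDerivAt (fun z : ℝ => ((p.1, z) : ℝ × ℝ)) ((0 : ℝ), (1 : ℝ)) p.2 :=
      (hasDerivAt_const _ _).prodMk (hasDerivAt_id _)
    exact hd.hasFDerivAt.comp_hasDerivAt p.2 inner
  have lemB : ∀ p ∈ U, HasDerivAt (fun t => u t p.2) (D p (1, 0)) p.1 := by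
    intro p hp
    have hd : DifferentiableAt ℝ f p :=
      (hsmooth.contDiffAt (hU.mem_nhds hp)).differentiableAt (by simp)
    have inner : HasDerivAt (fun t : ℝ => ((t, p.2) : ℝ × ℝ)) ((1 : ℝ), (0 : ℝ)) p.1 :=
      (hasDerivAt_id _).prodMk (hasDerivAt_const _ _)
    exact hd.hasFDerivAt.comp_hasDerivAt p.1 inner
  have hDx0 : D (s, y) (0, 1) = 0 := by
    have := (lemA (s, y) hmem).deriv
    simpa [hdx] using this.symm
  set a : ℝ := D (s, y) (1, 0) with ha_def
  have hane : a ≠ 0 := by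
    intro h0
    rw [ha_def] at h0
    exact hdt ((lemB (s, y) hmem).deriv.trans h0)
  -- D is smooth on U
  have hD : ContDiffOn ℝ (⊤ : ℕ∞) D U := hsmooth.fderiv_of_isOpen hU (by simp)
  set D2 : ℝ × ℝ →L[ℝ] (ℝ × ℝ →L[ℝ] ℝ) := fderiv ℝ D (s, y) with hD2_def
  have hDdiff : DifferentiableAt ℝ D (s, y) :=
    (hD.contDiffAt hU_nhds).differentiableAt (by simp)
  -- second derivative along x at (s,y)
  have lemC : HasDerivAt (fun z => D (s, z) (0, 1)) (D2 (0, 1) (0, 1)) y := by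
    have inner : HasDerivAt (fun z : ℝ => ((s, z) : ℝ × ℝ)) ((0 : ℝ), (1 : ℝ)) y :=
      (hasDerivAt_const _ _).prodMk (hasDerivAt_id _)
    have h1 : HasDerivAt (fun z => D (s, z)) (D2 (0, 1)) y :=
      hDdiff.hasFDerivAt.comp_hasDerivAt y inner
    have := h1.clm_apply (hasDerivAt_const y ((0 : ℝ), (1 : ℝ)))
    simpa using this
  have hxx : a = D2 (0, 1) (0, 1) := by
    have heq : deriv (fun z => deriv (fun w => u s w) z) y = D2 (0, 1) (0, 1) := by
      have hev : (fun z => deriv (fun w => u s w) z) =ᶠ[nhds y] fun z => D (s, z) (0, 1) := by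
        have hV : {z : ℝ | (s, z) ∈ U} ∈ nhds y :=
          (hU.preimage (by fun_prop : Continuous fun z : ℝ => ((s, z) : ℝ × ℝ))).mem_nhds hmem
        filter_upwards [hV] with z hz
        exact (lemA (s, z) hz).deriv
      rw [hev.deriv_eq]
      exact lemC.deriv
    have hh := hheat (s, y) hmem
    simp only at hh
    rw [← heq, ← hh]
    exact ((lemB (s, y) hmem).deriv).symm
  -- the map F = (u, u_x) and its derivative
  set ev : ((ℝ × ℝ) →L[ℝ] ℝ) →L[ℝ] ℝ := ContinuousLinearMap.apply ℝ ℝ ((0 : ℝ), (1 : ℝ)) with hev_def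
  set A : (ℝ × ℝ) →L[ℝ] (ℝ × ℝ) := (D (s, y)).prod (ev.comp D2) with hA_def
  set F : ℝ × ℝ → ℝ × ℝ := fun p => (u p.1 p.2, deriv (fun z => u p.1 z) p.2) with hF_def
  have hGA : HasStrictFDerivAt (fun p => (f p, ev (D p))) A (s, y) := by
    have h1 : HasStrictFDerivAt f (D (s, y)) (s, y) :=
      (hsmooth.contDiffAt hU_nhds).hasStrictFDerivAt (by simp)
    have h2 : HasStrictFDerivAt D D2 (s, y) :=
      (hD.contDiffAt hU_nhds).hasStrictFDerivAt (by simp)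
    exact h1.prodMk ((ev.hasStrictFDerivAt.comp (s, y) h2))
  have hFA : HasStrictFDerivAt F A (s, y) := by
    apply hGA.congr_of_eventuallyEq
    filter_upwards [hU_nhds] with p hp
    have := (lemA p hp).deriv
    simp only [hF_def, hf_def, this, hev_def, ContinuousLinearMap.apply_apply]
  -- decompose CLM values on the basis
  have hbasis : ∀ (L : (ℝ × ℝ) →L[ℝ] ℝ) (h k : ℝ),
      L (h, k) = h * L (1, 0) + k * L (0, 1) := by
    intro L h k
    have : ((h, k) : ℝ × ℝ) = h • ((1 : ℝ), (0 : ℝ)) + k • ((0 : ℝ), (1 : ℝ)) := by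
      simp [Prod.ext_iff]
    rw [this, map_add, map_smul, map_smul]; simp [smul_eq_mul]
  -- A is injective
  have hinj : Function.Injective A := by
    have : ∀ v : ℝ × ℝ, A v = 0 → v = 0 := by
      rintro ⟨h, k⟩ hv
      rw [hA_def] at hv
      simp only [ContinuousLinearMap.prod_apply, ContinuousLinearMap.comp_apply,
        Prod.mk_eq_zero] at hv
      obtain ⟨h1, h2⟩ := hv
      rw [hbasis (D (s, y)) h k, hDx0] at h1
      have hh0 : h = 0 := by
        have : h * a = 0 := by simpa [ha_def] using h1
        exact (mul_eq_zero.1 this).resolve_right hane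
      subst hh0
      have h2' : D2 (0, k) (0, 1) = 0 := by
        simpa [hev_def, ContinuousLinearMap.apply_apply] using h2
      have : ((0 : ℝ), k) = k • ((0 : ℝ), (1 : ℝ)) := by simp [Prod.ext_iff]
      rw [this, map_smul] at h2'
      have : k * a = 0 := by
        simpa [hxx, smul_eq_mul] using h2'
      have hk0 : k = 0 := (mul_eq_zero.1 this).resolve_right hane
      simp [hk0]
    intro v w hvw
    have : A (v - w) = 0 := by rw [map_sub, hvw, sub_self]
    have := this ▸ (this)
    have hz := ‹∀ v : ℝ × ℝ, A v = 0 → v = 0› (v - w) ‹A (v - w) = 0›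
    exact sub_eq_zero.1 hz
  -- package A as a continuous linear equiv
  set e : (ℝ × ℝ) ≃L[ℝ] (ℝ × ℝ) :=
    (LinearEquiv.ofInjectiveEndo (A : (ℝ × ℝ) →ₗ[ℝ] (ℝ × ℝ)) hinj).toContinuousLinearEquiv
    with he_def
  have hcoe : (e : (ℝ × ℝ) →L[ℝ] (ℝ × ℝ)) = A := by
    ext <;> simp [he_def, LinearEquiv.coe_ofInjectiveEndo]
  have hFe : HasStrictFDerivAt F (e : (ℝ × ℝ) →L[ℝ] (ℝ × ℝ)) (s, y) := by
    rw [hcoe]; exact hFA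
  set H := hFe.toOpenPartialHomeomorph F with hH_def
  refine ⟨H.source ∩ U, H.open_source.inter hU, inter_subset_right,
    ⟨hFe.mem_toOpenPartialHomeomorph_source, hmem⟩, ?_⟩
  rintro p ⟨hpH, hpU⟩ ⟨h1, h2⟩
  have hFp : F p = F (s, y) := by
    simp only [hF_def, h1, h2, hzero, hdx]
  have hcoeH : (H : ℝ × ℝ → ℝ × ℝ) = F := hFe.toOpenPartialHomeomorph_coe
  exact H.injOn hpH hFe.mem_toOpenPartialHomeomorph_source (by rw [hcoeH]; exact hFp)
end
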